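/- arXiv:0809.2866 — 3 statements merged into one kernel-verified Lean document; each statement's English description precedes it below -/
import Mathlib

section
/- Define on the vector space spanned by planar rooted trees decorated by 𝒟 the product t ⋆ t' = ∑_{i=0}^{n} B_d(t₁…t_i t t_{i+1}…t_n), where t' = B_d(t₁…t_n) (t grafted on the root of t' in all possible positions). Then ⋆ is a left non-associative permutative product: t₁ ⋆ (t₂ ⋆ t₃) = t₂ ⋆ (t₁ ⋆ t₃) for all trees t₁, t₂, t₃. -/
/-- Planar rooted trees decorated by `D`: a decoration of the root together with the
ordered list of subtrees grafted on the root. -/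
inductive PTree (D : Type*) : Type _
  | node : D → List (PTree D) → PTree D

/-- The linear span of decorated planar rooted trees (the free brace algebra `Br(𝒟)`). -/
abbrev TreeSpan (D : Type*) := PTree D →₀ ℤ

/-- Linear extension of a map defined on the basis of trees. -/
noncomputable def extend {D : Type*} (f : PTree D → TreeSpan D) (x : TreeSpan D) :
    TreeSpan D :=
  x.sum fun s c => c • f s

/-- `t ⋆ t' = ∑_{i=0}^{n} B_d(t₁ … t_i t t_{i+1} … t_n)` for `t' = B_d(t₁ … t_n)`:
grafting of `t` on the root of `t'` in all possible positions. -/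
noncomputable def starT {D : Type*} (t : PTree D) : PTree D → TreeSpan D
  | .node d l =>
      ((List.range (l.length + 1)).map fun i =>
        Finsupp.single (PTree.node d (l.insertIdx i t)) (1 : ℤ)).sum

/-!
Both `t₁ ⋆ (t₂ ⋆ B_d(l))` and `t₂ ⋆ (t₁ ⋆ B_d(l))` are sums of the trees `B_d(l')`, where `l'`
runs over the words obtained by inserting `t₁` and `t₂` into `l`. Inserting `b` at position
`i` and then `a` at position `j` gives the same word as inserting `a` at `j` and then `b` at
`i + 1` when `j ≤ i`, and as inserting `a` at `j - 1` and then `b` at `i` when `i < j`. This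
reindexing is an involution of the set of pairs of positions, so the two sums agree.
-/

/-- The pairs of positions at which two elements can be inserted in turn into a word of
length `n`. -/
def insertPositions (n : ℕ) : Finset (ℕ × ℕ) :=
  Finset.range (n + 1) ×ˢ Finset.range (n + 2)

theorem mem_insertPositions {n : ℕ} {p : ℕ × ℕ} :
    p ∈ insertPositions n ↔ p.1 ≤ n ∧ p.2 ≤ n + 1 := by
  simp only [insertPositions, Finset.mem_product, Finset.mem_range, Nat.lt_succ_iff]

def swapInsertPositions (p : ℕ × ℕ) : ℕ × ℕ :=
  if p.2 ≤ p.1 then (p.2, p.1 + 1) else (p.2 - 1, p.1)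

theorem swapInsertPositions_involutive : Function.Involutive swapInsertPositions := by
  rintro ⟨i, j⟩
  unfold swapInsertPositions
  split_ifs <;> grind

theorem swapInsertPositions_mem_insertPositions {n : ℕ} {p : ℕ × ℕ}
    (hp : p ∈ insertPositions n) : swapInsertPositions p ∈ insertPositions n := by
  rw [mem_insertPositions] at hp ⊢
  unfold swapInsertPositions
  split_ifs <;> omega

theorem insertIdx_insertIdx_swapInsertPositions {α : Type*} (a b : α) (l : List α)
    {p : ℕ × ℕ} (hp : p ∈ insertPositions l.length) :
    (l.insertIdx p.1 b).insertIdx p.2 a =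
      (l.insertIdx (swapInsertPositions p).1 a).insertIdx (swapInsertPositions p).2 b := by
  obtain ⟨i, j⟩ := p
  rw [mem_insertPositions] at hp
  unfold swapInsertPositions
  split_ifs with hji
  · exact (List.insertIdx_comm a b hji hp.1).symm
  · obtain ⟨k, rfl⟩ : ∃ k, j = k + 1 := ⟨j - 1, by omega⟩
    exact List.insertIdx_comm b a (by omega) (by omega)

theorem sum_insertIdx_insertIdx_comm {α M : Type*} [AddCommMonoid M] (f : List α → M)
    (a b : α) (l : List α) :
    ∑ p ∈ insertPositions l.length, f ((l.insertIdx p.1 b).insertIdx p.2 a) =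
      ∑ p ∈ insertPositions l.length, f ((l.insertIdx p.1 a).insertIdx p.2 b) :=
  Finset.sum_nbij' swapInsertPositions swapInsertPositions
    (fun _ => swapInsertPositions_mem_insertPositions)
    (fun _ => swapInsertPositions_mem_insertPositions)
    (fun p _ => swapInsertPositions_involutive p) (fun p _ => swapInsertPositions_involutive p)
    fun _ hp => by rw [insertIdx_insertIdx_swapInsertPositions a b l hp]

theorem extend_eq_linearCombination {D : Type*} (f : PTree D → TreeSpan D) :
    extend f = Finsupp.linearCombination ℤ f :=
  rfl

theorem starT_node {D : Type*} (t : PTree D) (d : D) (l : List (PTree D)) :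
    starT t (.node d l) =
      ∑ i ∈ Finset.range (l.length + 1), Finsupp.single (PTree.node d (l.insertIdx i t)) 1 :=
  rfl

theorem extend_starT_starT_node {D : Type*} (a b : PTree D) (d : D) (l : List (PTree D)) :
    extend (starT a) (starT b (.node d l)) =
      ∑ p ∈ insertPositions l.length,
        Finsupp.single (PTree.node d ((l.insertIdx p.1 b).insertIdx p.2 a)) 1 := by
  rw [starT_node, extend_eq_linearCombination, map_sum, insertPositions, Finset.sum_product]
  refine Finset.sum_congr rfl fun i hi => ?_
  rw [Finsupp.linearCombination_single, one_smul, starT_node,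
    List.length_insertIdx_of_le_length (Nat.lt_succ_iff.mp (Finset.mem_range.mp hi))]

/-- The root-grafting product `⋆` on planar decorated rooted trees is a left
non-associative permutative product: `t₁ ⋆ (t₂ ⋆ t₃) = t₂ ⋆ (t₁ ⋆ t₃)`. -/
theorem star_naPermutative {D : Type*} (t₁ t₂ t₃ : PTree D) :
    extend (starT t₁) (starT t₂ t₃) = extend (starT t₂) (starT t₁ t₃) := by
  obtain ⟨d, l⟩ := t₃
  rw [extend_starT_starT_node, extend_starT_starT_node]
  exact sum_insertIdx_insertIdx_comm (fun l' => Finsupp.single (PTree.node d l') 1) t₁ t₂ l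
end

section
/- Let F(x) = ∑_{n≥1} aₙ xⁿ and G(x) = ∑_{n≥1} bₙ xⁿ be formal power series with integer coefficients, zero constant term, and suppose G(x) = F(x) · ∏_{i≥1} (1 − x^i)^{a_i − b_i} (the product makes sense as each factor is 1 + O(x^i)). Then aₙ = bₙ for all n, i.e. F = G. -/
/-!
Strong induction on `n`. Once `a k = b k` for `k < n`, the two truncated products at `N = n`
share the factor `Q = ∏_{i<n} (1 - X^i)^{e_i}` and differ only by a power of `1 - X^n`, which
is `1` modulo `X^n` and so cannot reach the coefficient of `X^n` of `F Q` or `G Q` (both have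
no constant term). Hence `(G - F) Q` has no `X^n` term; as `G - F = O(X^n)` and `Q(0) = 1`,
that coefficient is `b_n - a_n`.
-/

open PowerSeries Finset

section
variable {R : Type*} [CommRing R]

theorem PowerSeries.X_pow_dvd_one_sub_X_pow_pow_sub_one (n e : ℕ) :
    (X : PowerSeries R) ^ n ∣ (1 - X ^ n) ^ e - 1 := by
  have h := sub_dvd_pow_sub_pow (1 - X ^ n : PowerSeries R) 1 e
  rwa [sub_sub_cancel_left, one_pow, neg_dvd] at h

theorem PowerSeries.coeff_mul_one_sub_X_pow_pow {F : PowerSeries R} (hF : constantCoeff F = 0)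
    (n e : ℕ) : coeff n (F * (1 - X ^ n) ^ e) = coeff n F := by
  have hdvd : (X : PowerSeries R) ^ (n + 1) ∣ F * ((1 - X ^ n) ^ e - 1) := by
    rw [pow_succ']
    exact mul_dvd_mul (X_dvd_iff.mpr hF) (X_pow_dvd_one_sub_X_pow_pow_sub_one n e)
  have h := X_pow_dvd_iff.mp hdvd n n.lt_succ_self
  rwa [mul_sub, mul_one, map_sub, sub_eq_zero] at h

theorem PowerSeries.coeff_mul_of_X_pow_dvd {n : ℕ} {D : PowerSeries R} (hD : X ^ n ∣ D)
    (Q : PowerSeries R) : coeff n (D * Q) = coeff n D * constantCoeff Q := by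
  obtain ⟨D, rfl⟩ := hD
  rw [mul_assoc, coeff_X_pow_mul', coeff_X_pow_mul', if_pos le_rfl, if_pos le_rfl, Nat.sub_self,
    coeff_zero_eq_constantCoeff_apply, coeff_zero_eq_constantCoeff_apply, map_mul]

theorem PowerSeries.constantCoeff_prod_one_sub_X_pow_pow {s : Finset ℕ} (hs : 0 ∉ s)
    (e : ℕ → ℕ) : constantCoeff (∏ i ∈ s, (1 - X ^ i : PowerSeries R) ^ e i) = 1 := by
  rw [map_prod]
  refine prod_eq_one fun i hi => ?_
  have hi0 : i ≠ 0 := fun h => hs (h ▸ hi)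
  simp [zero_pow hi0]

end

/-- Series-comparison lemma: if `F(x) = ∑ aₙxⁿ` and `G(x) = ∑ bₙxⁿ` have integer
coefficients, zero constant terms, and `G = F · ∏_{i≥1} (1-x^i)^{a_i - b_i}` (encoded,
with the integer exponents split into positive and negative parts and the products
harmlessly truncated, as `G·∏(1-x^i)^{(b_i-a_i)₊} = F·∏(1-x^i)^{(a_i-b_i)₊}`), then
`aₙ = bₙ` for all `n`, i.e. `F = G`. -/
theorem series_comparison (a b : ℕ → ℤ) (ha0 : a 0 = 0) (hb0 : b 0 = 0)
    (h : ∀ N : ℕ,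
      (PowerSeries.coeff (R := ℚ) N) ((PowerSeries.mk fun n => (b n : ℚ)) *
        ∏ i ∈ Finset.Icc 1 N, (1 - PowerSeries.X ^ i) ^ (b i - a i).toNat) =
      (PowerSeries.coeff (R := ℚ) N) ((PowerSeries.mk fun n => (a n : ℚ)) *
        ∏ i ∈ Finset.Icc 1 N, (1 - PowerSeries.X ^ i) ^ (a i - b i).toNat)) :
    ∀ n, a n = b n := by
  intro n
  induction n using Nat.strong_induction_on with
  | _ n ih =>
  rcases n with _ | m
  · rw [ha0, hb0]
  set A : PowerSeries ℚ := mk fun n => (a n : ℚ)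
  set B : PowerSeries ℚ := mk fun n => (b n : ℚ)
  set Q : PowerSeries ℚ := ∏ i ∈ Icc 1 m, (1 - X ^ i) ^ (a i - b i).toNat
  have hQ : constantCoeff Q = 1 := constantCoeff_prod_one_sub_X_pow_pow (by simp) _
  have hA : constantCoeff A = 0 := by simp [A, ← coeff_zero_eq_constantCoeff_apply, ha0]
  have hB : constantCoeff B = 0 := by simp [B, ← coeff_zero_eq_constantCoeff_apply, hb0]
  have hBQ : coeff (m + 1) (B * Q) = coeff (m + 1) (A * Q) := by
    have hh := h (m + 1)
    have hlow : ∏ i ∈ Icc 1 m, (1 - X ^ i : PowerSeries ℚ) ^ (b i - a i).toNat = Q :=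
      prod_congr rfl fun i hi => by rw [ih i (by simp at hi; omega)]
    rwa [prod_Icc_succ_top (by omega), prod_Icc_succ_top (by omega), hlow, ← mul_assoc,
      ← mul_assoc, coeff_mul_one_sub_X_pow_pow (by simp [hB]),
      coeff_mul_one_sub_X_pow_pow (by simp [hA])] at hh
  have hdvd : X ^ (m + 1) ∣ B - A := X_pow_dvd_iff.mpr fun k hk => by simp [A, B, ih k hk]
  have h := coeff_mul_of_X_pow_dvd hdvd Q
  rw [sub_mul, map_sub, hBQ, sub_self, hQ, mul_one, map_sub] at h
  simp only [A, B, coeff_mk] at h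
  exact_mod_cast (sub_eq_zero.mp h.symm).symm
end

section
/- Let D ≥ 1, let T(x) = (1−√(1−4Dx))/2 with coefficients t'ₙ, and define V(x) = T(x) · ∏_{i≥1} (1 − x^i)^{t'ᵢ}. Then all coefficients of V(x) are non-negative integers; moreover the coefficient of x² in V(x) is 0 and the coefficient of x³ is D²(D−1)/2. -/
/-!
Since `T = D X + T²`, we have `T = D X (1 - T)⁻¹`, so `T · P = D X · P (1 - T)⁻¹` for the
truncated product `P = ∏_{i ≤ N} (1 - Xⁱ)^{t'ᵢ}`. Integrality and non-negativity then come from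
Lazard elimination: for any graded alphabet with `aᵢ` letters of degree `i ≥ 1` and series
`A = ∑ aᵢ Xⁱ`, the series `∏_{i ≤ N} (1 - Xⁱ)^{aᵢ} / (1 - A)` has natural coefficients.
Removing one letter `x` of minimal degree `s` (so `A = Xˢ + A'`) gives
`1 - A = (1 - Xˢ)(1 - A₂)` with `A₂ = A' / (1 - Xˢ)`, the series of the letters `xᵏy`, `y ≠ x`.
The new alphabet has one letter of degree `s` fewer, and at least as many letters as `A'` in
every degree: `A₂ = A' + B` with `B = Xˢ A₂`. Hence the series for `A` is the one for `A₂` times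
`∏ (1 - Xⁱ)^{-bᵢ}`, and induction on `(N - s, aₛ)` terminates when `s > N`, where only
`(1 - A)⁻¹ = ∑ Aᵏ` remains. The coefficients of `x²` and `x³` are computed directly.
-/

open Finset

namespace PowerSeries

variable {R : Type*} [CommRing R]

theorem coeff_one_sub_X_pow (e m : ℕ) :
    coeff m ((1 - X : R⟦X⟧) ^ e) = (-1) ^ m * e.choose m := by
  induction e generalizing m with
  | zero => cases m <;> simp [coeff_one]
  | succ e ih =>
    cases m with
    | zero => simp
    | succ m =>
      rw [pow_succ', sub_mul, one_mul, map_sub, coeff_succ_X_mul, ih, ih, Nat.choose_succ_succ']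
      push_cast
      ring

theorem coeff_one_sub_X_pow_pow {i : ℕ} (hi : i ≠ 0) (e n : ℕ) :
    coeff n ((1 - X ^ i : R⟦X⟧) ^ e) =
      if i ∣ n then (-1 : R) ^ (n / i) * e.choose (n / i) else 0 := by
  have hexpand : (1 - X ^ i : R⟦X⟧) ^ e = expand i hi ((1 - X) ^ e) := by simp
  rw [hexpand, coeff_expand, coeff_one_sub_X_pow]

end PowerSeries

namespace BracePreLie

open PowerSeries

noncomputable def natCoeffs : Subsemiring ℚ⟦X⟧ := (map (Nat.castRingHom ℚ)).rangeS

theorem mem_natCoeffs_iff {f : ℚ⟦X⟧} : f ∈ natCoeffs ↔ ∀ n, ∃ m : ℕ, coeff n f = m := by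
  constructor
  · rintro ⟨g, rfl⟩ n
    exact ⟨coeff n g, coeff_map _ _ _⟩
  · intro h
    choose m hm using h
    exact ⟨PowerSeries.mk m, by ext n; simp [hm]⟩

theorem inv_one_sub_map_mem_natCoeffs {a : ℕ⟦X⟧} (ha : constantCoeff a = 0) :
    (1 - map (Nat.castRingHom ℚ) a)⁻¹ ∈ natCoeffs := by
  set A := map (Nat.castRingHom ℚ) a
  have hA0 : constantCoeff A = 0 := by
    rw [← coeff_zero_eq_constantCoeff_apply, coeff_map, coeff_zero_eq_constantCoeff_apply, ha,
      map_zero]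
  have hunit : constantCoeff (1 - A) ≠ 0 := by simp [hA0]
  refine mem_natCoeffs_iff.mpr fun n => ?_
  have hgeom : (1 - A)⁻¹ = map (Nat.castRingHom ℚ) (∑ k ∈ range (n + 1), a ^ k)
      + (1 - A)⁻¹ * A ^ (n + 1) := by
    simp only [map_sum, map_pow]
    linear_combination (∑ k ∈ range (n + 1), A ^ k) * PowerSeries.mul_inv_cancel _ hunit
      - (1 - A)⁻¹ * mul_neg_geom_sum A (n + 1)
  have htail : coeff n ((1 - A)⁻¹ * A ^ (n + 1)) = 0 :=
    X_pow_dvd_iff.mp (dvd_mul_of_dvd_right (pow_dvd_pow_of_dvd (X_dvd_iff.mpr hA0) _) _) n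
      n.lt_succ_self
  exact ⟨_, by rw [hgeom, map_add, htail, add_zero, coeff_map, Nat.coe_castRingHom]⟩

noncomputable def eulerProduct (N : ℕ) (a : ℕ⟦X⟧) : ℚ⟦X⟧ :=
  ∏ i ∈ Icc 1 N, (1 - X ^ i) ^ coeff i a

theorem eulerProduct_add (N : ℕ) (a b : ℕ⟦X⟧) :
    eulerProduct N (a + b) = eulerProduct N a * eulerProduct N b := by
  simp only [eulerProduct, map_add, pow_add, prod_mul_distrib]

theorem eulerProduct_X_pow {N s : ℕ} (hs : s ∈ Icc 1 N) :
    eulerProduct N (X ^ s) = 1 - X ^ s := by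
  rw [eulerProduct, prod_eq_single_of_mem s hs fun i _ hi => by simp [coeff_X_pow, hi]]
  simp

theorem eulerProduct_eq_one_of_X_pow_dvd {N : ℕ} {a : ℕ⟦X⟧} (ha : X ^ (N + 1) ∣ a) :
    eulerProduct N a = 1 :=
  prod_eq_one fun i hi => by
    rw [X_pow_dvd_iff.mp ha i (Nat.lt_succ_of_le (mem_Icc.mp hi).2), pow_zero]

theorem constantCoeff_eulerProduct (N : ℕ) (a : ℕ⟦X⟧) :
    constantCoeff (eulerProduct N a) = 1 := by
  simp only [eulerProduct, map_prod, map_pow, map_sub, map_one, constantCoeff_X]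
  exact prod_eq_one fun i hi => by
    rw [zero_pow (Nat.one_le_iff_ne_zero.mp (mem_Icc.mp hi).1), sub_zero, one_pow]

theorem inv_eulerProduct_mem_natCoeffs (N : ℕ) (a : ℕ⟦X⟧) :
    (eulerProduct N a)⁻¹ ∈ natCoeffs := by
  have hinv : (eulerProduct N a)⁻¹ = ∏ i ∈ Icc 1 N, ((1 - X ^ i)⁻¹) ^ coeff i a := by
    rw [eq_comm, eq_inv_iff_mul_eq_one (by simp [constantCoeff_eulerProduct]), eulerProduct,
      ← prod_mul_distrib]
    refine prod_eq_one fun i hi => ?_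
    have hi0 : i ≠ 0 := Nat.one_le_iff_ne_zero.mp (mem_Icc.mp hi).1
    rw [← mul_pow, PowerSeries.inv_mul_cancel _ (by simp [hi0]), one_pow]
  rw [hinv]
  refine prod_mem fun i hi => pow_mem ?_ _
  have hi0 : i ≠ 0 := Nat.one_le_iff_ne_zero.mp (mem_Icc.mp hi).1
  have h := inv_one_sub_map_mem_natCoeffs (a := X ^ i) (by simp [hi0])
  rwa [map_pow, map_X] at h

theorem exists_eq_X_pow_add {s : ℕ} {a : ℕ⟦X⟧} (ha : X ^ s ∣ a) (hc : coeff s a ≠ 0) :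
    ∃ a', a = X ^ s + a' ∧ X ^ s ∣ a' := by
  obtain ⟨q, rfl⟩ := ha
  refine ⟨X ^ s * PowerSeries.mk fun n => coeff n q - if n = 0 then 1 else 0, ?_,
    dvd_mul_right _ _⟩
  rw [← mul_one_add]
  congr 1
  ext n
  rcases n with _ | n
  · rw [coeff_X_pow_mul', if_pos le_rfl, Nat.sub_self] at hc
    simp only [map_add, coeff_one, coeff_mk, if_true]
    omega
  · simp

theorem exists_eq_one_add_X_pow_mul_self {s : ℕ} (hs : s ≠ 0) :
    ∃ g : ℕ⟦X⟧, g = 1 + X ^ s * g := by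
  obtain ⟨g, hg⟩ := inv_one_sub_map_mem_natCoeffs (a := X ^ s) (by simp [hs])
  refine ⟨g, map_injective (Nat.castRingHom ℚ) Nat.cast_injective ?_⟩
  simp only [map_pow, map_X, map_add, map_one, map_mul] at hg ⊢
  rw [hg]
  linear_combination PowerSeries.mul_inv_cancel (1 - X ^ s : ℚ⟦X⟧) (by simp [hs])

theorem exists_eliminate_letter {N s : ℕ} (hs : s ∈ Icc 1 N) {a : ℕ⟦X⟧} (ha : X ^ s ∣ a)
    (hc : coeff s a ≠ 0) :
    ∃ a₂ b : ℕ⟦X⟧, X ^ s ∣ a₂ ∧ coeff s a₂ < coeff s a ∧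
      eulerProduct N a * (1 - map (Nat.castRingHom ℚ) a)⁻¹
        = eulerProduct N a₂ * (1 - map (Nat.castRingHom ℚ) a₂)⁻¹ * (eulerProduct N b)⁻¹ := by
  have hs0 : s ≠ 0 := Nat.one_le_iff_ne_zero.mp (mem_Icc.mp hs).1
  obtain ⟨a', rfl, ha'⟩ := exists_eq_X_pow_add ha hc
  obtain ⟨g, hg⟩ := exists_eq_one_add_X_pow_mul_self hs0
  set a₂ := a' * g
  have ha₂ : a₂ = a' + X ^ s * a₂ := by
    simp only [a₂]
    nth_rewrite 1 [hg]
    ring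
  refine ⟨a₂, X ^ s * a₂, dvd_mul_of_dvd_left ha' g, ?_, ?_⟩
  · have h0 : coeff 0 a₂ = 0 :=
      X_pow_dvd_iff.mp (dvd_mul_of_dvd_left ha' g) 0 (Nat.pos_of_ne_zero hs0)
    rw [ha₂]
    simp [coeff_X_pow_mul', h0, coeff_X_pow]
  · set φ := map (Nat.castRingHom ℚ)
    have hfactor : 1 - φ (X ^ s + a') = (1 - X ^ s) * (1 - φ a₂) := by
      have h := congrArg φ ha₂
      simp only [φ, map_add, map_mul, map_pow, map_X] at h ⊢
      linear_combination h
    have hE₂ : eulerProduct N a₂ = eulerProduct N a' * eulerProduct N (X ^ s * a₂) := by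
      rw [← eulerProduct_add, ← ha₂]
    have h₁ := PowerSeries.mul_inv_cancel (1 - X ^ s : ℚ⟦X⟧) (by simp [hs0])
    have h₂ := PowerSeries.mul_inv_cancel (eulerProduct N (X ^ s * a₂))
      (by simp [constantCoeff_eulerProduct])
    rw [hfactor, PowerSeries.mul_inv_rev, hE₂, eulerProduct_add, eulerProduct_X_pow hs]
    linear_combination (eulerProduct N a' * (1 - φ a₂)⁻¹) * (h₁ - h₂)

theorem eulerProduct_mul_inv_mem_natCoeffs (N : ℕ) {s : ℕ} (hs : 1 ≤ s) {a : ℕ⟦X⟧}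
    (ha : X ^ s ∣ a) : eulerProduct N a * (1 - map (Nat.castRingHom ℚ) a)⁻¹ ∈ natCoeffs := by
  by_cases hN : N < s
  · rw [eulerProduct_eq_one_of_X_pow_dvd ((pow_dvd_pow X hN).trans ha), one_mul]
    exact inv_one_sub_map_mem_natCoeffs (X_dvd_iff.mp ((dvd_pow_self X (by omega)).trans ha))
  by_cases hc : coeff s a = 0
  · have ha' : X ^ (s + 1) ∣ a := X_pow_dvd_iff.mpr fun d hd => by
      rcases Nat.lt_succ_iff_lt_or_eq.mp hd with hd | rfl
      exacts [X_pow_dvd_iff.mp ha d hd, hc]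
    exact eulerProduct_mul_inv_mem_natCoeffs N (s := s + 1) (by omega) ha'
  obtain ⟨a₂, b, ha₂, hdecr, heq⟩ :=
    exists_eliminate_letter (N := N) (mem_Icc.mpr ⟨hs, by omega⟩) ha hc
  rw [heq]
  exact mul_mem (eulerProduct_mul_inv_mem_natCoeffs N hs ha₂) (inv_eulerProduct_mem_natCoeffs N b)
termination_by (N + 1 - s, coeff s a)

noncomputable def decoratedTreeSeries (D : ℕ) : ℕ⟦X⟧ :=
  PowerSeries.mk fun n => if n = 0 then 0 else D ^ n * catalan (n - 1)

theorem map_decoratedTreeSeries (D : ℕ) :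
    map (Nat.castRingHom ℚ) (decoratedTreeSeries D)
      = C (D : ℚ) * X * rescale (D : ℚ) (map (Nat.castRingHom ℚ) catalanSeries) := by
  ext n
  rcases n with _ | n
  · simp [decoratedTreeSeries]
  · rw [mul_comm (C _), mul_assoc, coeff_succ_X_mul, coeff_C_mul, coeff_rescale, coeff_map,
      coeff_map, catalanSeries_coeff, decoratedTreeSeries, coeff_mk, if_neg n.succ_ne_zero]
    push_cast
    ring

theorem map_decoratedTreeSeries_mul_one_sub (D : ℕ) :
    map (Nat.castRingHom ℚ) (decoratedTreeSeries D)
      * (1 - map (Nat.castRingHom ℚ) (decoratedTreeSeries D)) = C (D : ℚ) * X := by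
  have hK := congrArg (fun f => rescale (D : ℚ) (map (Nat.castRingHom ℚ) f))
    catalanSeries_sq_mul_X_add_one
  simp only [map_add, map_mul, map_pow, map_X, map_one, rescale_X] at hK
  rw [map_decoratedTreeSeries]
  linear_combination -(C (D : ℚ) * X) * hK

end BracePreLie

open PowerSeries BracePreLie

theorem brace_preLie_generators_low_general (D : ℕ) :
    let t' : ℕ → ℕ := fun n => if n = 0 then 0 else D ^ n * catalan (n - 1)
    let T : PowerSeries ℚ := PowerSeries.mk fun n => (t' n : ℚ)
    let V : ℕ → ℚ := fun N =>
      (PowerSeries.coeff (R := ℚ) N) (T * ∏ i ∈ Finset.Icc 1 N, (1 - PowerSeries.X ^ i) ^ t' i)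
    (∀ N, ∃ m : ℕ, V N = m) ∧ V 2 = 0 ∧ V 3 = ((D : ℚ) ^ 2 * ((D : ℚ) - 1)) / 2 := by
  intro t' T V
  have hT : T = map (Nat.castRingHom ℚ) (decoratedTreeSeries D) := by
    ext n
    simp [T, t', decoratedTreeSeries]
  have hTinv : T = C (D : ℚ) * X * (1 - T)⁻¹ :=
    (eq_mul_inv_iff_mul_eq (by simp [T, t'])).mpr (hT ▸ map_decoratedTreeSeries_mul_one_sub D)
  refine ⟨fun N => ?_, ?_, ?_⟩
  · have hP : ∏ i ∈ Icc 1 N, (1 - X ^ i : ℚ⟦X⟧) ^ t' i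
        = eulerProduct N (decoratedTreeSeries D) := by
      simp [eulerProduct, decoratedTreeSeries, t']
    have hmem : T * eulerProduct N (decoratedTreeSeries D) ∈ natCoeffs := by
      rw [hTinv, mul_assoc, mul_comm (1 - T)⁻¹, hT]
      refine mul_mem ⟨C D * X, by simp [map_X]⟩ ?_
      exact eulerProduct_mul_inv_mem_natCoeffs N le_rfl
        (by simp [X_dvd_iff, decoratedTreeSeries])
    obtain ⟨g, hg⟩ := hmem
    exact ⟨coeff N g, by simp only [V, hP, ← hg, coeff_map, Nat.coe_castRingHom]⟩
  · simp [V, T, t', show Icc 1 2 = {1, 2} from rfl, coeff_mul, Finset.Nat.antidiagonal_succ,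
      coeff_one_sub_X_pow_pow, coeff_one_sub_X_pow]
    ring
  · simp [V, T, t', show Icc 1 3 = {1, 2, 3} from rfl, coeff_mul, Finset.Nat.antidiagonal_succ,
      coeff_one_sub_X_pow_pow, coeff_one_sub_X_pow, catalan_two, Nat.cast_choose_two]
    ring

/-- Let `T(x) = (1-√(1-4Dx))/2 = ∑ t'ₙ xⁿ` with `t'ₙ = Dⁿ·Catalan(n-1)` (the series of
planar rooted trees decorated by a `D`-element set) and let
`V(x) = T(x)·∏_{i≥1}(1-x^i)^{t'ᵢ}` (coefficients computed with the harmlessly truncated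
product).  Then all coefficients of `V` are non-negative integers, the coefficient of
`x²` is `0`, and the coefficient of `x³` is `D²(D-1)/2`. -/
theorem brace_preLie_generators_low (D : ℕ) (hD : 1 ≤ D) :
    let t' : ℕ → ℕ := fun n => if n = 0 then 0 else D ^ n * catalan (n - 1)
    let T : PowerSeries ℚ := PowerSeries.mk fun n => (t' n : ℚ)
    let V : ℕ → ℚ := fun N =>
      (PowerSeries.coeff (R := ℚ) N) (T * ∏ i ∈ Finset.Icc 1 N, (1 - PowerSeries.X ^ i) ^ t' i)
    (∀ N, ∃ m : ℕ, V N = m) ∧ V 2 = 0 ∧ V 3 = ((D : ℚ) ^ 2 * ((D : ℚ) - 1)) / 2 :=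
  brace_preLie_generators_low_general D
end
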